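/- arXiv:2302.06807 — 4 statements merged into one kernel-verified Lean document; each statement's English description precedes it below -/
import Mathlib

section
/- Let π_{μ,ω,b} = {z ∈ B^n : μ⟨ω,z⟩_B − b = 0} be a horosphere with μ > 0, ω ∈ S^{n-1}, b ∈ ℝ. Then for any x ∈ B^n, the hyperbolic distance from x to π_{μ,ω,b} satisfies d_B(x, π_{μ,ω,b}) = |μ⟨ω,x⟩_B − b|/μ. -/
/-- Inverse hyperbolic cosine. -/
noncomputable def acosh (x : ℝ) : ℝ := Real.log (x + Real.sqrt (x ^ 2 - 1))

/-- The Poincaré inner product (negative of the Busemann function) in the Poincaré ball. -/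
noncomputable def pip {n : ℕ} (ω x : EuclideanSpace ℝ (Fin n)) : ℝ :=
  Real.log ((1 - ‖x‖ ^ 2) / ‖ω - x‖ ^ 2)

/-- The hyperbolic distance in the Poincaré ball model. -/
noncomputable def dB {n : ℕ} (x y : EuclideanSpace ℝ (Fin n)) : ℝ :=
  acosh (1 + 2 * ‖x - y‖ ^ 2 / ((1 - ‖x‖ ^ 2) * (1 - ‖y‖ ^ 2)))

lemma acosh_cosh {s : ℝ} (hs : 0 ≤ s) : acosh (Real.cosh s) = s := by
  have hsinh : 0 ≤ Real.sinh s := by positivity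
  unfold acosh
  rw [show Real.cosh s ^ 2 - 1 = Real.sinh s ^ 2 by have := Real.cosh_sq s; linarith,
    Real.sqrt_sq hsinh, Real.cosh_add_sinh, Real.log_exp]

lemma le_acosh {s t : ℝ} (hs : 0 ≤ s) (h : Real.cosh s ≤ t) : s ≤ acosh t := by
  have h1 : (1:ℝ) ≤ Real.cosh s := Real.one_le_cosh s
  have hsinh : 0 ≤ Real.sinh s := by positivity
  have h2 : Real.sinh s ≤ Real.sqrt (t ^ 2 - 1) := by
    rw [show Real.sinh s = Real.sqrt (Real.sinh s ^ 2) from (Real.sqrt_sq hsinh).symm]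
    apply Real.sqrt_le_sqrt
    nlinarith [Real.cosh_sq s]
  have h3 : Real.exp s ≤ t + Real.sqrt (t ^ 2 - 1) := by
    rw [← Real.cosh_add_sinh]; linarith
  calc s = Real.log (Real.exp s) := (Real.log_exp s).symm
    _ ≤ _ := Real.log_le_log (Real.exp_pos s) h3

lemma key_ineq {n : ℕ} (ω x z : EuclideanSpace ℝ (Fin n)) (hω : ‖ω‖ = 1) :
    ((1 - ‖x‖ ^ 2) * ‖ω - z‖ ^ 2 - (1 - ‖z‖ ^ 2) * ‖ω - x‖ ^ 2) ^ 2
      ≤ 4 * ‖x - z‖ ^ 2 * (‖ω - x‖ ^ 2 * ‖ω - z‖ ^ 2) := by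
  set p := ω - x with hp
  set q := ω - z with hq
  have hxp : (1 - ‖x‖ ^ 2) = 2 * (inner ℝ ω p : ℝ) - ‖p‖ ^ 2 := by
    have hxe : x = ω - p := by rw [hp]; abel
    rw [hxe, norm_sub_sq_real, hω]; ring
  have hzq : (1 - ‖z‖ ^ 2) = 2 * (inner ℝ ω q : ℝ) - ‖q‖ ^ 2 := by
    have hze : z = ω - q := by rw [hq]; abel
    rw [hze, norm_sub_sq_real, hω]; ring
  have hxz : x - z = q - p := by rw [hp, hq]; abel
  set v : EuclideanSpace ℝ (Fin n) := ‖q‖ ^ 2 • p - ‖p‖ ^ 2 • q with hv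
  have hiv : (inner ℝ ω v : ℝ) = ‖q‖ ^ 2 * (inner ℝ ω p : ℝ) - ‖p‖ ^ 2 * (inner ℝ ω q : ℝ) := by
    rw [hv, inner_sub_right, real_inner_smul_right, real_inner_smul_right]
  have hvn : ‖v‖ ^ 2 = ‖x - z‖ ^ 2 * (‖p‖ ^ 2 * ‖q‖ ^ 2) := by
    rw [hxz, ← real_inner_self_eq_norm_sq, ← real_inner_self_eq_norm_sq, hv]
    simp only [inner_sub_left, inner_sub_right, real_inner_smul_left, real_inner_smul_right]
    rw [real_inner_self_eq_norm_sq p, real_inner_self_eq_norm_sq q, real_inner_comm q p]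
    ring
  have hcs := real_inner_mul_inner_self_le ω v
  rw [real_inner_self_eq_norm_sq ω, real_inner_self_eq_norm_sq v, hω] at hcs
  have key : (1 - ‖x‖ ^ 2) * ‖q‖ ^ 2 - (1 - ‖z‖ ^ 2) * ‖p‖ ^ 2 = 2 * (inner ℝ ω v : ℝ) := by
    rw [hxp, hzq, hiv]; ring
  rw [key]
  nlinarith [hcs, hvn]

lemma norm_sq_pos_sub {n : ℕ} {ω y : EuclideanSpace ℝ (Fin n)} (hω : ‖ω‖ = 1)
    (hy : ‖y‖ < 1) : 0 < ‖ω - y‖ ^ 2 := by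
  have : ω ≠ y := fun h => by rw [h] at hω; linarith [hω ▸ hy]
  have h := norm_sub_pos_iff.mpr this
  exact pow_pos h 2

lemma exp_pip {n : ℕ} {ω y : EuclideanSpace ℝ (Fin n)} (hω : ‖ω‖ = 1) (hy : ‖y‖ < 1) :
    Real.exp (pip ω y) = (1 - ‖y‖ ^ 2) / ‖ω - y‖ ^ 2 := by
  have h1 : (0:ℝ) < 1 - ‖y‖ ^ 2 := by nlinarith [norm_nonneg y]
  have h2 := norm_sq_pos_sub hω hy
  exact Real.exp_log (by positivity)

lemma lower_bound {n : ℕ} (ω x z : EuclideanSpace ℝ (Fin n)) (hω : ‖ω‖ = 1)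
    (hx : ‖x‖ < 1) (hz : ‖z‖ < 1) (c : ℝ) (hc : pip ω z = c) :
    |pip ω x - c| ≤ dB x z := by
  have hA : (0:ℝ) < 1 - ‖x‖ ^ 2 := by nlinarith [norm_nonneg x]
  have hC : (0:ℝ) < 1 - ‖z‖ ^ 2 := by nlinarith [norm_nonneg z]
  have hP := norm_sq_pos_sub hω hx
  have hQ := norm_sq_pos_sub hω hz
  have hD : (0:ℝ) ≤ ‖x - z‖ ^ 2 := by positivity
  have hex : Real.exp (pip ω x) = (1 - ‖x‖ ^ 2) / ‖ω - x‖ ^ 2 := exp_pip hω hx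
  have hez : Real.exp c = (1 - ‖z‖ ^ 2) / ‖ω - z‖ ^ 2 := hc ▸ exp_pip hω hz
  set a := (1 - ‖x‖ ^ 2) * ‖ω - z‖ ^ 2 with ha
  set e := (1 - ‖z‖ ^ 2) * ‖ω - x‖ ^ 2 with he
  have hapos : 0 < a := mul_pos hA hQ
  have hepos : 0 < e := mul_pos hC hP
  have hcoshval : Real.cosh (|pip ω x - c|) = (a / e + e / a) / 2 := by
    rw [Real.cosh_abs, Real.cosh_eq, Real.exp_sub, Real.exp_neg, Real.exp_sub, hex, hez,
      ha, he]
    field_simp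
  have key := key_ineq ω x z hω
  have hsum : a / e + e / a = (a ^ 2 + e ^ 2) / (e * a) := by field_simp
  have hid : (2 * (1 + 2 * ‖x - z‖ ^ 2 / ((1 - ‖x‖ ^ 2) * (1 - ‖z‖ ^ 2)))) * (e * a)
      = 2 * e * a + 4 * ‖x - z‖ ^ 2 * (‖ω - x‖ ^ 2 * ‖ω - z‖ ^ 2) := by
    rw [ha, he]; field_simp; ring
  have H3 : (a ^ 2 + e ^ 2) / (e * a)
      ≤ 2 * (1 + 2 * ‖x - z‖ ^ 2 / ((1 - ‖x‖ ^ 2) * (1 - ‖z‖ ^ 2))) := by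
    rw [div_le_iff₀ (by positivity), hid]
    nlinarith [key]
  have hcosh : Real.cosh (|pip ω x - c|)
      ≤ 1 + 2 * ‖x - z‖ ^ 2 / ((1 - ‖x‖ ^ 2) * (1 - ‖z‖ ^ 2)) := by
    rw [hcoshval, hsum]; linarith
  exact le_acosh (abs_nonneg _) hcosh

lemma minimizer {n : ℕ} (ω x : EuclideanSpace ℝ (Fin n)) (hω : ‖ω‖ = 1)
    (hx : ‖x‖ < 1) (c : ℝ) :
    ∃ z : EuclideanSpace ℝ (Fin n), ‖z‖ < 1 ∧ pip ω z = c ∧ dB x z = |pip ω x - c| := by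
  have hA : (0:ℝ) < 1 - ‖x‖ ^ 2 := by nlinarith [norm_nonneg x]
  have hP : (0:ℝ) < ‖ω - x‖ ^ 2 := norm_sq_pos_sub hω hx
  set P := ‖ω - x‖ ^ 2 with hPdef
  clear_value P
  set u := (inner ℝ ω x : ℝ) with hudef
  clear_value u
  have hPu : P = 1 - 2 * u + ‖x‖ ^ 2 := by
    rw [hPdef, norm_sub_sq_real, hω, ← hudef]; ring
  set h := (1 - ‖x‖ ^ 2) / P with hhdef
  clear_value h
  have hh : 0 < h := by rw [hhdef]; exact div_pos hA hP
  set h₀ := Real.exp c with hh0def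
  clear_value h₀
  have hh₀ : 0 < h₀ := by rw [hh0def]; exact Real.exp_pos c
  set g : EuclideanSpace ℝ (Fin n) := (2 / P) • (x - ω) + (h - h₀) • ω with hg
  have hxwω : (inner ℝ (x - ω) ω : ℝ) = u - 1 := by
    rw [inner_sub_left, real_inner_self_eq_norm_sq, hω, one_pow, hudef]
    rw [real_inner_comm]
  have hωxw : (inner ℝ ω (x - ω) : ℝ) = u - 1 := by
    rw [inner_sub_right, real_inner_self_eq_norm_sq, hω, one_pow, hudef]
  have hgw : (inner ℝ ω g : ℝ) = -1 - h₀ := by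
    rw [hg, inner_add_right, real_inner_smul_right, real_inner_smul_right,
      real_inner_self_eq_norm_sq, hω, hωxw, hhdef]
    field_simp
    linarith [hPu]
  have hxwg : (inner ℝ (x - ω) g : ℝ) = 2 + (h - h₀) * (u - 1) := by
    rw [hg, inner_add_right, real_inner_smul_right, real_inner_smul_right,
      real_inner_self_eq_norm_sq, hxwω]
    have : ‖x - ω‖ ^ 2 = P := by rw [hPdef, norm_sub_rev]
    rw [this]
    field_simp
  have hFval : ‖g‖ ^ 2 = 4 / P + 4 * (h - h₀) * (u - 1) / P + (h - h₀) ^ 2 := by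
    rw [hg, norm_add_sq_real, real_inner_smul_left, real_inner_smul_right, hxwω,
      norm_smul, norm_smul, hω]
    have h1 : ‖x - ω‖ ^ 2 = P := by rw [hPdef, norm_sub_rev]
    rw [mul_pow, mul_pow, Real.norm_eq_abs, Real.norm_eq_abs, sq_abs, sq_abs, h1]
    field_simp
    ring
  set F := ‖g‖ ^ 2 with hFdef
  clear_value F
  have hgne : g ≠ 0 := by
    intro h0
    rw [h0, inner_zero_right] at hgw
    linarith
  have hFpos : 0 < F := by rw [hFdef]; exact pow_pos (norm_pos_iff.mpr hgne) 2
  set z : EuclideanSpace ℝ (Fin n) := ω + (2 / F) • g with hzdef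
  clear_value z
  have hz1 : 1 - ‖z‖ ^ 2 = 4 * h₀ / F := by
    rw [hzdef, norm_add_sq_real, real_inner_smul_right, hgw, norm_smul, Real.norm_eq_abs,
      mul_pow, sq_abs, hω, ← hFdef]
    field_simp
    ring
  have hzn : ‖z‖ < 1 := by
    have h4 : (0:ℝ) < 4 * h₀ / F := by positivity
    nlinarith [norm_nonneg z]
  have hwz : ‖ω - z‖ ^ 2 = 4 / F := by
    have hrw : ω - z = -((2 / F) • g) := by rw [hzdef]; abel
    rw [hrw, norm_neg, norm_smul, Real.norm_eq_abs, mul_pow, sq_abs, ← hFdef]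
    field_simp
    ring
  have hpipz : pip ω z = c := by
    unfold pip
    rw [hz1, hwz, show (4 * h₀ / F) / (4 / F) = h₀ by field_simp, hh0def, Real.log_exp]
  have hxz : x - z = (x - ω) - (2 / F) • g := by rw [hzdef]; abel
  have hPF : P * F = (h - h₀) ^ 2 * P + 4 + 4 * (h - h₀) * (u - 1) := by
    rw [hFval]
    field_simp
    ring
  have hxωP : ‖x - ω‖ ^ 2 = P := by rw [hPdef, norm_sub_rev]
  have hxzF : ‖x - z‖ ^ 2 * F = (h - h₀) ^ 2 * P := by
    rw [hxz, norm_sub_sq_real, real_inner_smul_right, hxwg, norm_smul, Real.norm_eq_abs,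
      mul_pow, sq_abs, ← hFdef, hxωP]
    field_simp
    linear_combination hPF
  have hxznorm : ‖x - z‖ ^ 2 = (h - h₀) ^ 2 * P / F := by
    rw [eq_div_iff hFpos.ne']; exact hxzF
  have hAhP : 1 - ‖x‖ ^ 2 = h * P := by rw [hhdef]; field_simp
  have harg : 1 + 2 * ((h - h₀) ^ 2 * P / F) / ((h * P) * (4 * h₀ / F))
      = (h ^ 2 + h₀ ^ 2) / (2 * h * h₀) := by
    field_simp
    ring
  have hpipx : pip ω x = Real.log h := by unfold pip; rw [← hPdef, ← hhdef]
  have hcosh : (h ^ 2 + h₀ ^ 2) / (2 * h * h₀) = Real.cosh |Real.log h - c| := by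
    rw [Real.cosh_abs, Real.cosh_eq, Real.exp_sub, Real.exp_neg, Real.exp_sub,
      Real.exp_log hh, ← hh0def]
    field_simp
  have hdb : dB x z = |pip ω x - c| := by
    unfold dB
    rw [hxznorm, hAhP, hz1, harg, hcosh, acosh_cosh (abs_nonneg _), hpipx]
  exact ⟨z, hzn, hpipz, hdb⟩

/-- The hyperbolic distance from a point `x ∈ B^n` to the horosphere
`π_{μ,ω,b} = {z ∈ B^n : μ⟨ω,z⟩_B − b = 0}` is `|μ⟨ω,x⟩_B − b|/μ`. -/
theorem dist_to_horosphere {n : ℕ} (ω x : EuclideanSpace ℝ (Fin n))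
    (hω : ‖ω‖ = 1) (hx : ‖x‖ < 1) (μ b : ℝ) (hμ : 0 < μ) :
    sInf (dB x '' {z : EuclideanSpace ℝ (Fin n) | ‖z‖ < 1 ∧ μ * pip ω z - b = 0}) =
      |μ * pip ω x - b| / μ := by
  obtain ⟨z₀, hz₀n, hz₀p, hz₀d⟩ := minimizer ω x hω hx (b / μ)
  have hμne : μ ≠ 0 := ne_of_gt hμ
  have hmemS : z₀ ∈ {z : EuclideanSpace ℝ (Fin n) | ‖z‖ < 1 ∧ μ * pip ω z - b = 0} := by
    refine ⟨hz₀n, ?_⟩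
    rw [hz₀p]
    field_simp
    ring
  have hmem : dB x z₀ ∈ dB x '' {z : EuclideanSpace ℝ (Fin n) | ‖z‖ < 1 ∧ μ * pip ω z - b = 0} :=
    ⟨z₀, hmemS, rfl⟩
  have hTval : |μ * pip ω x - b| / μ = |pip ω x - b / μ| := by
    rw [show μ * pip ω x - b = μ * (pip ω x - b / μ) by field_simp, abs_mul, abs_of_pos hμ]
    field_simp
  have hlb : ∀ y ∈ dB x '' {z : EuclideanSpace ℝ (Fin n) | ‖z‖ < 1 ∧ μ * pip ω z - b = 0},
      |pip ω x - b / μ| ≤ y := by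
    rintro y ⟨z, ⟨h1, h2⟩, rfl⟩
    refine lower_bound ω x z hω hx h1 (b / μ) ?_
    field_simp
    linarith
  rw [hTval]
  apply le_antisymm
  · have := csInf_le ⟨_, hlb⟩ hmem
    rwa [hz₀d] at this
  · exact le_csInf ⟨_, hmem⟩ hlb
end

section
/- For fixed ω ∈ S^{n-1} and λ₁ < λ₂, every point x on the horosphere {z : ⟨ω,z⟩_B = λ₁} has hyperbolic distance exactly λ₂ − λ₁ to the horosphere {z : ⟨ω,z⟩_B = λ₂}; i.e., inf over y with ⟨ω,y⟩_B = λ₂ of d_B(x,y) equals λ₂ − λ₁, independent of the choice of x. -/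
set_option maxHeartbeats 1000000

open RealInnerProductSpace

lemma acosh_cosh_s7 {t : ℝ} (ht : 0 ≤ t) : acosh (Real.cosh t) = t := by
  unfold acosh
  have h1 : Real.cosh t ^ 2 - 1 = Real.sinh t ^ 2 := by
    rw [Real.cosh_sq]; ring
  have h2 : 0 ≤ Real.sinh t := by positivity
  rw [h1, Real.sqrt_sq h2, Real.cosh_add_sinh, Real.log_exp]

lemma acosh_mono {y x : ℝ} (hy : 1 ≤ y) (hxy : y ≤ x) : acosh y ≤ acosh x := by
  unfold acosh
  apply Real.log_le_log (by nlinarith [Real.sqrt_nonneg (y ^ 2 - 1)])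
  have : Real.sqrt (y ^ 2 - 1) ≤ Real.sqrt (x ^ 2 - 1) :=
    Real.sqrt_le_sqrt (by nlinarith)
  linarith

lemma combo_sq {E : Type*} [NormedAddCommGroup E] [InnerProductSpace ℝ E]
    (A w : E) (α β : ℝ) :
    ‖α • A + β • w‖ ^ 2 = α ^ 2 * ‖A‖ ^ 2 + 2 * α * β * ⟪A, w⟫ + β ^ 2 * ‖w‖ ^ 2 := by
  rw [norm_add_sq_real, norm_smul, norm_smul, real_inner_smul_left, real_inner_smul_right]
  simp only [mul_pow, sq_abs, Real.norm_eq_abs]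
  ring

lemma cs_key {E : Type*} [NormedAddCommGroup E] [InnerProductSpace ℝ E]
    (ω x z : E) (hω : ‖ω‖ = 1) :
    ((1 - ‖z‖ ^ 2) * ‖ω - x‖ ^ 2 - (1 - ‖x‖ ^ 2) * ‖ω - z‖ ^ 2) ^ 2
      ≤ 4 * (‖ω - x‖ ^ 2 * ‖ω - z‖ ^ 2) * ‖x - z‖ ^ 2 := by
  obtain ⟨p, hp⟩ : ∃ p, p = ‖ω - x‖ ^ 2 := ⟨_, rfl⟩
  obtain ⟨q, hq⟩ : ∃ q, q = ‖ω - z‖ ^ 2 := ⟨_, rfl⟩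
  obtain ⟨w, hw⟩ : ∃ w : E, w = p • (ω - z) - q • (ω - x) := ⟨_, rfl⟩
  have hBA : (ω - z) - (ω - x) = x - z := by abel
  have hwn : ‖w‖ ^ 2 = p * q * ‖x - z‖ ^ 2 := by
    have h1 : ‖w‖ ^ 2 = p ^ 2 * ‖ω - z‖ ^ 2 - 2 * (p * q * ⟪ω - z, ω - x⟫)
        + q ^ 2 * ‖ω - x‖ ^ 2 := by
      rw [hw, norm_sub_sq_real, norm_smul, norm_smul, real_inner_smul_left,
        real_inner_smul_right]
      simp only [mul_pow, sq_abs, Real.norm_eq_abs]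
      ring
    have h2 : ‖x - z‖ ^ 2 = ‖ω - z‖ ^ 2 - 2 * ⟪ω - z, ω - x⟫ + ‖ω - x‖ ^ 2 := by
      rw [← hBA, norm_sub_sq_real]
    rw [h1, h2, ← hp, ← hq]
    ring
  have hwi : ⟪ω, w⟫ = p * (1 - ⟪ω, z⟫) - q * (1 - ⟪ω, x⟫) := by
    rw [hw, inner_sub_right, real_inner_smul_right, real_inner_smul_right,
      inner_sub_right, inner_sub_right, real_inner_self_eq_norm_sq, hω]
    ring
  have hCS : ⟪ω, w⟫ ^ 2 ≤ ‖w‖ ^ 2 := by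
    have h := abs_real_inner_le_norm ω w
    rw [hω, one_mul] at h
    nlinarith [abs_nonneg ⟪ω, w⟫, sq_abs ⟪ω, w⟫]
  have ha : 1 - ‖x‖ ^ 2 = 2 * (1 - ⟪ω, x⟫) - p := by
    have := norm_sub_sq_real ω x
    rw [hω] at this
    rw [hp]; nlinarith
  have hb : 1 - ‖z‖ ^ 2 = 2 * (1 - ⟪ω, z⟫) - q := by
    have := norm_sub_sq_real ω z
    rw [hω] at this
    rw [hq]; nlinarith
  have key : ((1 - ‖z‖ ^ 2) * ‖ω - x‖ ^ 2 - (1 - ‖x‖ ^ 2) * ‖ω - z‖ ^ 2) = 2 * ⟪ω, w⟫ := by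
    rw [hwi, ha, hb, ← hp, ← hq]; ring
  rw [key, ← hp, ← hq]
  nlinarith [hCS, hwn]

/-- Horospheres tangent at the same ideal point are parallel: every point `x` on the
horosphere at Busemann level `λ₁` has hyperbolic distance exactly `λ₂ − λ₁` to the
horosphere at level `λ₂ > λ₁`, independent of `x`. -/
theorem parallel_horospheres {n : ℕ} (ω : EuclideanSpace ℝ (Fin n)) (hω : ‖ω‖ = 1)
    (l1 l2 : ℝ) (hl : l1 < l2) (x : EuclideanSpace ℝ (Fin n)) (hx : ‖x‖ < 1)
    (hx1 : pip ω x = l1) :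
    sInf (dB x '' {z : EuclideanSpace ℝ (Fin n) | ‖z‖ < 1 ∧ pip ω z = l2}) = l2 - l1 := by
  have hx0 : 0 ≤ ‖x‖ := norm_nonneg x
  have ha : 0 < 1 - ‖x‖ ^ 2 := by nlinarith
  have hωx : ω - x ≠ 0 := by
    intro h
    have : ω = x := by rwa [sub_eq_zero] at h
    rw [this] at hω; linarith
  have hp : 0 < ‖ω - x‖ ^ 2 := pow_pos (norm_pos_iff.mpr hωx) 2
  obtain ⟨u, hu⟩ : ∃ u, u = ‖x‖ ^ 2 := ⟨_, rfl⟩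
  obtain ⟨s, hsd⟩ : ∃ s, s = ⟪x, ω⟫ := ⟨_, rfl⟩
  have hpxs : ‖ω - x‖ ^ 2 = 1 - 2 * s + u := by
    rw [norm_sub_sq_real, hω, real_inner_comm, ← hsd, ← hu]; ring
  obtain ⟨a, had⟩ : ∃ a, a = 1 - u := ⟨_, rfl⟩
  obtain ⟨p, hpd⟩ : ∃ p, p = 1 - 2 * s + u := ⟨_, rfl⟩
  have ha' : 0 < a := by rw [had, hu]; exact ha
  have hp' : 0 < p := by rw [hpd, ← hpxs]; exact hp
  have hs : 2 * (1 - s) = a + p := by rw [had, hpd]; ring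
  have hratio : (1 - ‖x‖ ^ 2) / ‖ω - x‖ ^ 2 = a / p := by
    rw [had, hu, hpd, ← hpxs]
  have hexp1 : Real.exp l1 = a / p := by
    rw [← hx1, pip, hratio]
    exact Real.exp_log (div_pos ha' hp')
  have hax : (1 : ℝ) - ‖x‖ ^ 2 = a := by rw [had, hu]
  have hpx : ‖ω - x‖ ^ 2 = p := by rw [hpxs, hpd]
  have hΔ : 0 < l2 - l1 := by linarith
  obtain ⟨c, hcd⟩ : ∃ c, c = Real.exp (l2 - l1) := ⟨_, rfl⟩
  have hc : 1 < c := by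
    rw [hcd, ← Real.exp_zero]
    exact Real.exp_lt_exp.mpr hΔ
  have hc0 : 0 < c := lt_trans one_pos hc
  have hcosh : Real.cosh (l2 - l1) = (c + 1 / c) / 2 := by
    rw [Real.cosh_eq, Real.exp_neg, ← hcd, one_div]
  -- lower bound
  have hlb : ∀ z : EuclideanSpace ℝ (Fin n), ‖z‖ < 1 → pip ω z = l2 → l2 - l1 ≤ dB x z := by
    intro z hz hz2
    have hz0 : 0 ≤ ‖z‖ := norm_nonneg z
    have hbz : 0 < 1 - ‖z‖ ^ 2 := by nlinarith
    have hωz : ω - z ≠ 0 := by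
      intro h
      have : ω = z := by rwa [sub_eq_zero] at h
      rw [this] at hω; linarith
    have hqz : 0 < ‖ω - z‖ ^ 2 := pow_pos (norm_pos_iff.mpr hωz) 2
    obtain ⟨b, hbd⟩ : ∃ b, b = 1 - ‖z‖ ^ 2 := ⟨_, rfl⟩
    obtain ⟨q, hqd⟩ : ∃ q, q = ‖ω - z‖ ^ 2 := ⟨_, rfl⟩
    obtain ⟨N, hNd⟩ : ∃ N, N = ‖x - z‖ ^ 2 := ⟨_, rfl⟩
    have hb' : 0 < b := hbd ▸ hbz
    have hq' : 0 < q := hqd ▸ hqz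
    have hN' : 0 ≤ N := by rw [hNd]; positivity
    have hexp2 : Real.exp l2 = b / q := by
      rw [← hz2, pip, ← hbd, ← hqd]
      exact Real.exp_log (div_pos hb' hq')
    have hcval : c * (a * q) = b * p := by
      have h := Real.exp_sub l2 l1
      rw [hexp1, hexp2, ← hcd] at h
      field_simp at h
      linarith
    have hkey := cs_key ω x z hω
    rw [hax, hpx, ← hbd, ← hqd, ← hNd] at hkey
    have hc1 : c = b * p / (a * q) := by
      rw [eq_div_iff (by positivity)]; linarith
    have h1c : 1 / c = a * q / (b * p) := by
      rw [div_eq_div_iff (ne_of_gt hc0) (by positivity)]; linarith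
    have harg : Real.cosh (l2 - l1) ≤ 1 + 2 * N / (a * b) := by
      have hid : 1 + 2 * N / (a * b) - (c + 1 / c) / 2 =
          (4 * (p * q) * N - (b * p - a * q) ^ 2) / (2 * (a * b * p * q)) := by
        rw [h1c, hc1]
        field_simp
        ring
      have h0 : 0 ≤ 1 + 2 * N / (a * b) - (c + 1 / c) / 2 := by
        rw [hid]
        exact div_nonneg (by linarith) (by positivity)
      rw [hcosh]; linarith
    have hdBz : dB x z = acosh (1 + 2 * N / (a * b)) := by
      simp only [dB]
      rw [hax, ← hbd, ← hNd]
    rw [hdBz]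
    calc l2 - l1 = acosh (Real.cosh (l2 - l1)) := (acosh_cosh_s7 hΔ.le).symm
      _ ≤ _ := acosh_mono (Real.one_le_cosh _) harg
  -- witness
  have h1s : 0 < 1 - s := by linarith
  obtain ⟨D, hDd⟩ : ∃ D, D = p + a * (c - 1) * (1 - s) + a ^ 2 * (c - 1) ^ 2 / 4 := ⟨_, rfl⟩
  have hD : 0 < D := by
    rw [hDd]
    have t1 : 0 ≤ a * (c - 1) * (1 - s) :=
      mul_nonneg (mul_nonneg ha'.le (by linarith)) (by linarith)
    have t2 : 0 ≤ a ^ 2 * (c - 1) ^ 2 / 4 := by positivity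
    linarith
  obtain ⟨α, hαd⟩ : ∃ α, α = p / D := ⟨_, rfl⟩
  obtain ⟨β, hβd⟩ : ∃ β, β = α * a * (c - 1) / 2 := ⟨_, rfl⟩
  have hα : 0 < α := by rw [hαd]; exact div_pos hp' hD
  have hβ : 0 ≤ β := by
    rw [hβd]
    have : 0 ≤ α * a * (c - 1) := mul_nonneg (mul_nonneg hα.le ha'.le) (by linarith)
    linarith
  obtain ⟨z₀, hz₀d⟩ : ∃ z₀ : EuclideanSpace ℝ (Fin n),
      z₀ = α • x + (1 - α - β) • ω := ⟨_, rfl⟩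
  have hsω : ⟪x, ω⟫ = s := hsd.symm
  have hux : ‖x‖ ^ 2 = u := hu.symm
  have hωω : ‖ω‖ ^ 2 = 1 := by rw [hω]; norm_num
  -- norms of the witness
  have hnz₀ : ‖z₀‖ ^ 2 = α ^ 2 * u + 2 * α * (1 - α - β) * s + (1 - α - β) ^ 2 := by
    rw [hz₀d, combo_sq, hsω, hux, hωω]; ring
  have hnωz₀ : ‖ω - z₀‖ ^ 2 = α ^ 2 * u - 2 * α * (α + β) * s + (α + β) ^ 2 := by
    have h : ω - z₀ = (-α) • x + (α + β) • ω := by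
      rw [hz₀d]; module
    rw [h, combo_sq, hsω, hux, hωω]; ring
  have hnxz₀ : ‖x - z₀‖ ^ 2 =
      (1 - α) ^ 2 * u - 2 * (1 - α) * (1 - α - β) * s + (1 - α - β) ^ 2 := by
    have h : x - z₀ = (1 - α) • x + (-(1 - α - β)) • ω := by
      rw [hz₀d]; module
    rw [h, combo_sq, hsω, hux, hωω]; ring
  -- scalar facts about the witness
  have hu2 : u = 1 - a := by rw [had]; ring
  have hs2 : s = (2 - a - p) / 2 := by linarith
  have hDne : D ≠ 0 := ne_of_gt hD
  have hane : a ≠ 0 := ne_of_gt ha'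
  have hpne : p ≠ 0 := ne_of_gt hp'
  have hcne : c ≠ 0 := ne_of_gt hc0
  have hDE : D = p + (a * (c - 1) / 2) * (a + p) + (a * (c - 1) / 2) ^ 2 := by
    rw [hDd, hs2]; ring
  have hrel : α * (p + (a * (c - 1) / 2) * (a + p) + (a * (c - 1) / 2) ^ 2) = p := by
    rw [hαd, ← hDE]
    exact div_mul_cancel₀ p hDne
  have hq0 : ‖ω - z₀‖ ^ 2 = α * p := by
    rw [hnωz₀, hβd, hu2, hs2]
    linear_combination α * hrel
  have hb0 : 1 - ‖z₀‖ ^ 2 = c * α * a := by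
    rw [hnz₀, hβd, hu2, hs2]
    linear_combination (-α) * hrel
  have hN0 : ‖x - z₀‖ ^ 2 = α * (a * (c - 1) / 2) ^ 2 := by
    rw [hnxz₀, hβd, hu2, hs2]
    linear_combination (α - 1) * hrel
  have hb0pos : 0 < 1 - ‖z₀‖ ^ 2 := by rw [hb0]; positivity
  have hz₀lt : ‖z₀‖ < 1 := by
    have h1 : ‖z₀‖ ^ 2 < 1 ^ 2 := by rw [one_pow]; linarith
    exact lt_of_pow_lt_pow_left₀ 2 zero_le_one h1
  have hexpl2 : Real.exp l2 = c * a / p := by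
    rw [show l2 = (l2 - l1) + l1 by ring, Real.exp_add, ← hcd, hexp1]
    ring
  have hpip0 : pip ω z₀ = l2 := by
    simp only [pip]
    rw [hb0, hq0]
    have h : c * α * a / (α * p) = Real.exp l2 := by
      rw [hexpl2]
      field_simp
    rw [h, Real.log_exp]
  have hαne : α ≠ 0 := ne_of_gt hα
  have hdB0 : dB x z₀ = l2 - l1 := by
    simp only [dB]
    rw [hax, hb0, hN0]
    have hbig : 1 + 2 * (α * (a * (c - 1) / 2) ^ 2) / (a * (c * α * a)) =
        Real.cosh (l2 - l1) := by
      rw [hcosh]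
      field_simp
      ring
    rw [hbig, acosh_cosh_s7 hΔ.le]
  -- conclude
  have hmem : dB x z₀ ∈ dB x '' {z : EuclideanSpace ℝ (Fin n) | ‖z‖ < 1 ∧ pip ω z = l2} :=
    ⟨z₀, ⟨hz₀lt, hpip0⟩, rfl⟩
  have hbdd : BddBelow (dB x '' {z : EuclideanSpace ℝ (Fin n) | ‖z‖ < 1 ∧ pip ω z = l2}) := by
    refine ⟨l2 - l1, ?_⟩
    rintro _ ⟨z, ⟨h1, h2⟩, rfl⟩
    exact hlb z h1 h2
  apply le_antisymm
  · have h := csInf_le hbdd hmem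
    rwa [hdB0] at h
  · apply le_csInf ⟨_, hmem⟩
    rintro _ ⟨z, ⟨h1, h2⟩, rfl⟩
    exact hlb z h1 h2
end

section
/- Fix x ∈ ℝ^n with 0 < ‖x‖ < 1. The function h(ω) = ‖ω − x‖², restricted to the open hemisphere A = {ν ∈ S^{n-1} : xᵀν/‖x‖ > 0}, is geodesically convex on the sphere S^{n-1} (with its standard round metric): for any two points p, q ∈ A and the minimizing geodesic γ from p to q (which lies in A), t ↦ h(γ(t)) is convex on [0,1]. -/
/-- The minimizing geodesic on the unit sphere from `p` to `q`, parameterized on `[0,1]`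
(junk value `p` when `p = q` or `p`, `q` are antipodal). -/
noncomputable def sphereGeo {n : ℕ} (p q : EuclideanSpace ℝ (Fin n)) (t : ℝ) :
    EuclideanSpace ℝ (Fin n) :=
  if Real.sin (Real.arccos (inner ℝ p q)) = 0 then p
  else (Real.sin (Real.arccos (inner ℝ p q)))⁻¹ •
    (Real.sin ((1 - t) * Real.arccos (inner ℝ p q)) • p +
     Real.sin (t * Real.arccos (inner ℝ p q)) • q)


open Real
lemma trig_key (θ t : ℝ) :
    sin ((1-t)*θ)^2 + 2 * sin ((1-t)*θ) * sin (t*θ) * cos θ + sin (t*θ)^2 = sin θ ^ 2 := by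
  have e : (1-t)*θ + t*θ = θ := by ring
  have h1 := Real.sin_add ((1-t)*θ) (t*θ)
  have h2 := Real.cos_add ((1-t)*θ) (t*θ)
  rw [e] at h1 h2
  rw [h1, h2]
  nlinarith [Real.sin_sq_add_cos_sq ((1-t)*θ), Real.sin_sq_add_cos_sq (t*θ),
    sq_nonneg (sin ((1-t)*θ) * sin (t*θ)), sq_nonneg (sin ((1-t)*θ) * cos (t*θ)),
    sq_nonneg (cos ((1-t)*θ) * sin (t*θ))]

lemma sin_aff_concave (θ : ℝ) (hθ0 : 0 ≤ θ) (hθπ : θ ≤ π) :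
    ConcaveOn ℝ (Set.Icc 0 1) (fun t : ℝ => Real.sin (t*θ)) := by
  refine ⟨convex_Icc 0 1, ?_⟩
  intro u hu v hv a b ha hb hab
  have key := strictConcaveOn_sin_Icc.concaveOn.2 (x := u*θ) (y := v*θ)
    ⟨mul_nonneg hu.1 hθ0, le_trans (by nlinarith [hu.2] : u*θ ≤ θ) hθπ⟩
    ⟨mul_nonneg hv.1 hθ0, le_trans (by nlinarith [hv.2] : v*θ ≤ θ) hθπ⟩ ha hb hab
  have e : (a • u + b • v) * θ = a • (u*θ) + b • (v*θ) := by simp [smul_eq_mul]; ring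
  dsimp only; rw [e]; exact key

lemma sin_aff_concave' (θ : ℝ) (hθ0 : 0 ≤ θ) (hθπ : θ ≤ π) :
    ConcaveOn ℝ (Set.Icc 0 1) (fun t : ℝ => Real.sin ((1-t)*θ)) := by
  refine ⟨convex_Icc 0 1, ?_⟩
  intro u hu v hv a b ha hb hab
  have key := strictConcaveOn_sin_Icc.concaveOn.2 (x := (1-u)*θ) (y := (1-v)*θ)
    ⟨mul_nonneg (by linarith [hu.2]) hθ0, le_trans (by nlinarith [hu.1] : (1-u)*θ ≤ θ) hθπ⟩
    ⟨mul_nonneg (by linarith [hv.2]) hθ0, le_trans (by nlinarith [hv.1] : (1-v)*θ ≤ θ) hθπ⟩ ha hb hab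
  have e : (1 - (a • u + b • v)) * θ = a • ((1-u)*θ) + b • ((1-v)*θ) := by
    simp only [smul_eq_mul]; nlinarith [hab]
  dsimp only; rw [e]; exact key

/-- For fixed `x` with `0 < ‖x‖ < 1`, the function `ω ↦ ‖ω − x‖²` is geodesically convex
on the open hemisphere `A = {ν ∈ S^{n-1} : xᵀν/‖x‖ > 0}`: for `p, q ∈ A` the minimizing
geodesic from `p` to `q` lies in `A` and `t ↦ ‖γ(t) − x‖²` is convex on `[0,1]`. -/
theorem sq_dist_geodesically_convex_on_hemisphere {n : ℕ}
    (x : EuclideanSpace ℝ (Fin n)) (hx0 : 0 < ‖x‖) (hx1 : ‖x‖ < 1)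
    (p q : EuclideanSpace ℝ (Fin n)) (hp : ‖p‖ = 1) (hq : ‖q‖ = 1)
    (hpA : (inner ℝ x p : ℝ) / ‖x‖ > 0) (hqA : (inner ℝ x q : ℝ) / ‖x‖ > 0) :
    (∀ t ∈ Set.Icc (0 : ℝ) 1, (inner ℝ x (sphereGeo p q t) : ℝ) / ‖x‖ > 0) ∧
    ConvexOn ℝ (Set.Icc (0 : ℝ) 1) (fun t => ‖sphereGeo p q t - x‖ ^ 2) := by
  set z : ℝ := inner ℝ p q with hz
  set θ : ℝ := Real.arccos z with hθdef
  by_cases hs : Real.sin θ = 0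
  · -- degenerate case
    have hγ : ∀ t, sphereGeo p q t = p := by
      intro t; rw [sphereGeo, if_pos]; exact hs
    constructor
    · intro t _; rw [hγ t]; exact hpA
    · have : (fun t : ℝ => ‖sphereGeo p q t - x‖ ^ 2) = fun _ => ‖p - x‖^2 := by
        funext t; rw [hγ t]
      rw [this]; exact convexOn_const _ (convex_Icc 0 1)
  · -- non-degenerate case
    have hθ0 : 0 ≤ θ := Real.arccos_nonneg z
    have hθπ : θ ≤ π := Real.arccos_le_pi z
    have hsnn : 0 ≤ Real.sin θ := Real.sin_nonneg_of_nonneg_of_le_pi hθ0 hθπ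
    have hspos : 0 < Real.sin θ := lt_of_le_of_ne hsnn (Ne.symm hs)
    have hθpos : 0 < θ := by
      rcases lt_or_eq_of_le hθ0 with h | h
      · exact h
      · exfalso; apply hs; rw [← h]; exact Real.sin_zero
    have hθltπ : θ < π := by
      rcases lt_or_eq_of_le hθπ with h | h
      · exact h
      · exfalso; apply hs; rw [h]; exact Real.sin_pi
    have hzabs : |z| ≤ 1 := by
      have := abs_real_inner_le_norm p q
      rwa [hp, hq, one_mul] at this
    have hcos : Real.cos θ = z := Real.cos_arccos (abs_le.mp hzabs).1 (abs_le.mp hzabs).2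
    have ha : (0:ℝ) < inner ℝ x p := by
      have := mul_pos hpA hx0
      rwa [div_mul_cancel₀ _ hx0.ne'] at this
    have hb : (0:ℝ) < inner ℝ x q := by
      have := mul_pos hqA hx0
      rwa [div_mul_cancel₀ _ hx0.ne'] at this
    have hγ : ∀ t, sphereGeo p q t =
        (Real.sin θ)⁻¹ • (Real.sin ((1-t)*θ) • p + Real.sin (t*θ) • q) := by
      intro t; rw [sphereGeo, if_neg]; exact hs
    have hinner : ∀ t, (inner ℝ x (sphereGeo p q t) : ℝ) =
        (Real.sin θ)⁻¹ * (Real.sin ((1-t)*θ) * inner ℝ x p + Real.sin (t*θ) * inner ℝ x q) := by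
      intro t
      rw [hγ t, real_inner_smul_right, inner_add_right, real_inner_smul_right,
        real_inner_smul_right]
    have hpp : (inner ℝ p p : ℝ) = 1 := by
      rw [real_inner_self_eq_norm_sq, hp]; norm_num
    have hqq : (inner ℝ q q : ℝ) = 1 := by
      rw [real_inner_self_eq_norm_sq, hq]; norm_num
    have hnorm1 : ∀ t, ‖sphereGeo p q t‖ ^ 2 = 1 := by
      intro t
      rw [hγ t, ← real_inner_self_eq_norm_sq]
      have hzz : (inner ℝ q p : ℝ) = Real.cos θ := by rw [real_inner_comm, ← hz, hcos]
      have hzz' : (inner ℝ p q : ℝ) = Real.cos θ := by rw [← hz, hcos]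
      simp only [real_inner_smul_left, real_inner_smul_right, inner_add_left, inner_add_right,
        hpp, hqq, hzz, hzz']
      have hk := trig_key θ t
      field_simp
      nlinarith [hk]
    have hnorm : ∀ t, ‖sphereGeo p q t - x‖ ^ 2 =
        1 + ‖x‖^2 - 2 * (((Real.sin θ)⁻¹ * inner ℝ x p) * Real.sin ((1-t)*θ) +
          ((Real.sin θ)⁻¹ * inner ℝ x q) * Real.sin (t*θ)) := by
      intro t
      rw [norm_sub_sq_real, hnorm1 t, real_inner_comm, hinner t]
      ring
    constructor
    · intro t ht
      refine div_pos ?_ hx0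
      rw [hinner t]
      have hu : 0 ≤ Real.sin ((1-t)*θ) :=
        Real.sin_nonneg_of_nonneg_of_le_pi (mul_nonneg (by linarith [ht.2]) hθ0)
          (by nlinarith [ht.1, hθltπ.le])
      rcases eq_or_lt_of_le ht.1 with h0 | h0
      · have : Real.sin (t*θ) = 0 := by rw [← h0]; simp
        have hu' : Real.sin ((1-t)*θ) = Real.sin θ := by rw [← h0]; norm_num
        rw [this, hu']
        have : Real.sin θ * (inner ℝ x p : ℝ) > 0 := mul_pos hspos ha
        positivity
      · have hv : 0 < Real.sin (t*θ) :=
          Real.sin_pos_of_pos_of_lt_pi (mul_pos h0 hθpos)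
            (by nlinarith [ht.2, hθltπ])
        exact mul_pos (inv_pos.mpr hspos)
          (add_pos_of_nonneg_of_pos (mul_nonneg hu ha.le) (mul_pos hv hb))
    · have hc1 : (0:ℝ) ≤ (Real.sin θ)⁻¹ * inner ℝ x p :=
        le_of_lt (mul_pos (inv_pos.mpr hspos) ha)
      have hc2 : (0:ℝ) ≤ (Real.sin θ)⁻¹ * inner ℝ x q :=
        le_of_lt (mul_pos (inv_pos.mpr hspos) hb)
      have hg : ConcaveOn ℝ (Set.Icc (0:ℝ) 1)
          (fun t => ((Real.sin θ)⁻¹ * inner ℝ x p) * Real.sin ((1-t)*θ) +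
            ((Real.sin θ)⁻¹ * inner ℝ x q) * Real.sin (t*θ)) := by
        have h1 := (sin_aff_concave' θ hθ0 hθπ).smul hc1
        have h2 := (sin_aff_concave θ hθ0 hθπ).smul hc2
        exact h1.add h2
      have hconv := ((hg.smul (by norm_num : (0:ℝ) ≤ 2)).neg.add
        (convexOn_const (1 + ‖x‖^2) (convex_Icc (0:ℝ) 1)))
      have heq : (fun t : ℝ => ‖sphereGeo p q t - x‖ ^ 2) =
          (fun t : ℝ => -((2:ℝ) • (fun t => ((Real.sin θ)⁻¹ * inner ℝ x p) * Real.sin ((1-t)*θ) +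
            ((Real.sin θ)⁻¹ * inner ℝ x q) * Real.sin (t*θ)) t) + (1 + ‖x‖^2)) := by
        funext t
        rw [hnorm t]
        simp [smul_eq_mul]; ring
      rw [heq]
      exact hconv
end

section
/- For ω ∈ S^{n-1} and x in the open unit ball of ℝ^n, the Poincaré inner product satisfies ⟨ω, x⟩_B ≤ log((1+‖x‖)/(1−‖x‖)), with equality iff x = tω for some t ∈ [0,1); i.e., the function is maximized over points of fixed norm at the point on the ray toward ω, and the supremum equals the hyperbolic distance from the origin to x. -/
/-- `⟨ω, x⟩_B ≤ log((1+‖x‖)/(1−‖x‖)) = d_B(0,x)`, with equality iff `x = tω`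
for some `t ∈ [0,1)`. -/
theorem pip_le_dist_origin {n : ℕ} (ω x : EuclideanSpace ℝ (Fin n))
    (hω : ‖ω‖ = 1) (hx : ‖x‖ < 1) :
    pip ω x ≤ Real.log ((1 + ‖x‖) / (1 - ‖x‖)) ∧
    (pip ω x = Real.log ((1 + ‖x‖) / (1 - ‖x‖)) ↔
      ∃ t : ℝ, 0 ≤ t ∧ t < 1 ∧ x = t • ω) := by
  set a := ‖x‖ with ha
  have ha0 : 0 ≤ a := norm_nonneg x
  have h1a : 0 < 1 - a := by linarith
  have h1a' : 0 < 1 + a := by linarith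
  have hnum : 0 < 1 - a ^ 2 := by nlinarith
  have hexp : ‖ω - x‖ ^ 2 = 1 - 2 * inner ℝ ω x + a ^ 2 := by
    rw [norm_sub_sq_real, hω]; ring
  have hCS : (inner ℝ ω x : ℝ) ≤ a := by
    calc (inner ℝ ω x : ℝ) ≤ ‖ω‖ * ‖x‖ := real_inner_le_norm ω x
    _ = a := by rw [hω, one_mul]
  have hD : (1 - a) ^ 2 ≤ ‖ω - x‖ ^ 2 := by rw [hexp]; nlinarith
  have hDpos : 0 < ‖ω - x‖ ^ 2 := lt_of_lt_of_le (by positivity) hD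
  have hle : pip ω x ≤ Real.log ((1 + a) / (1 - a)) := by
    apply Real.log_le_log (by positivity)
    rw [div_le_div_iff₀ hDpos h1a]
    nlinarith
  refine ⟨hle, ⟨fun heq => ?_, fun ⟨t, ht0, ht1, hxt⟩ => ?_⟩⟩
  · -- equality implies x = a • ω
    have hargs : (1 - a ^ 2) / ‖ω - x‖ ^ 2 = (1 + a) / (1 - a) := by
      have := congrArg Real.exp heq
      rwa [pip, Real.exp_log (by positivity), Real.exp_log (by positivity)] at this
    rw [div_eq_div_iff hDpos.ne' h1a.ne'] at hargs
    have hDeq : ‖ω - x‖ ^ 2 = (1 - a) ^ 2 := by nlinarith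
    have hinner : (inner ℝ ω x : ℝ) = ‖ω‖ * ‖x‖ := by
      rw [hω, one_mul, ← ha]
      rw [hexp] at hDeq; nlinarith
    rw [inner_eq_norm_mul_iff_real, hω, one_smul] at hinner
    exact ⟨a, ha0, hx, hinner.symm⟩
  · -- x = t • ω gives equality
    have hat : a = t := by rw [ha, hxt, norm_smul, hω, mul_one, Real.norm_eq_abs, abs_of_nonneg ht0]
    have hωx : ‖ω - x‖ = 1 - t := by
      rw [hxt]
      have : ω - t • ω = (1 - t) • ω := by rw [sub_smul, one_smul]
      rw [this, norm_smul, hω, mul_one, Real.norm_eq_abs, abs_of_nonneg (by linarith)]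
    rw [pip, hωx, ← ha, hat]
    congr 1
    have ht1' : (1 : ℝ) - t ≠ 0 := by linarith
    field_simp
    ring
end
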